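/- Let Q be the principal submatrix of the normalized adjacency matrix of a (d,λ)-expander indexed by V∖F, with adversarial density α_F < 1 − λ. Define Q̄ = (I − R)^{-1/2} Q (I − R)^{-1/2} where R is the diagonal matrix with R_{ww} = deg_F(w)/d. Then λ₁(Q̄) = 1 with an ℓ₂-normalized first eigenvector φ̄₁ given by φ̄₁(w)² = deg_{V∖F}(w) / Σ_{u∈V∖F} deg_{V∖F}(u), and max(|λ₂(Q̄)|, |λ_{n−f}(Q̄)|) ≤ λ/(1 − α_F). -/

import Mathlib

open Matrix Finset

/-- An orthonormal eigenbasis of a real symmetric matrix, with eigenvalues listed in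
decreasing order (with multiplicity). -/
def EigSystem {ι : Type} [Fintype ι] {k : ℕ} (M : Matrix ι ι ℝ)
    (μ : Fin k → ℝ) (φ : Fin k → ι → ℝ) : Prop :=
  Fintype.card ι = k ∧
  (∀ a b, ∑ i, φ a i * φ b i = if a = b then (1 : ℝ) else 0) ∧
  (∀ a, M.mulVec (φ a) = μ a • φ a) ∧
  (∀ a b : Fin k, a ≤ b → μ b ≤ μ a)

/-!
The row sums of `Q` are `r w = deg_{V∖F}(w)/d = 1 - deg_F(w)/d ≥ 1 - α_F`. Hence `√r` is fixed by
`Q̄ = diag(r)^{-1/2} Q diag(r)^{-1/2}`, and `Q̄` is similar to the row-stochastic matrix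
`diag(r)⁻¹ Q`, whose eigenvalues lie in `[-1, 1]` by Gershgorin; so `λ₁(Q̄) = 1`.

For the other eigenvalues write `Q̄ = Eᵀ Â E`, where `E` is `diag(r)^{-1/2}` followed by extension
by zero, so that `‖E t‖² ≤ (1 - α_F)⁻¹ ‖t‖²`. Rayleigh quotients of `Q̄` are therefore those of `Â`
rescaled by at most `(1 - α_F)⁻¹`: this bounds `λ_{n-f}(Q̄)` below by `-λ/(1 - α_F)`, and, testing
on a combination of the top two eigenvectors of `Q̄` whose image under `E` is orthogonal to the top
eigenvector of `Â`, bounds `λ₂(Q̄)` above by `λ/(1 - α_F)`.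
-/

namespace EigSystem

variable {ι : Type} [Fintype ι] {k : ℕ} {M : Matrix ι ι ℝ} {μ : Fin k → ℝ} {φ : Fin k → ι → ℝ}

theorem dotProduct_eq (h : EigSystem M μ φ) (a b : Fin k) :
    φ a ⬝ᵥ φ b = if a = b then 1 else 0 :=
  h.2.1 a b

theorem mulVec_eq (h : EigSystem M μ φ) (a : Fin k) : M *ᵥ φ a = μ a • φ a :=
  h.2.2.1 a

theorem antitone (h : EigSystem M μ φ) : Antitone μ :=
  h.2.2.2

theorem self_dotProduct_mulVec (h : EigSystem M μ φ) (a : Fin k) :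
    φ a ⬝ᵥ M *ᵥ φ a = μ a := by
  rw [h.mulVec_eq, dotProduct_smul, h.dotProduct_eq, if_pos rfl, smul_eq_mul, mul_one]

theorem transpose_mul_self [DecidableEq ι] (h : EigSystem M μ φ) : (of φ)ᵀ * of φ = 1 := by
  rw [← mul_eq_one_comm_of_equiv (Fintype.equivFinOfCardEq h.1).symm]
  ext a b
  exact h.dotProduct_eq a b

theorem eq_transpose_mul_diagonal_mul (h : EigSystem M μ φ) :
    M = (of φ)ᵀ * diagonal μ * of φ := by
  classical
  have hcol : M * (of φ)ᵀ = (of φ)ᵀ * diagonal μ := by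
    ext i a
    rw [mul_diagonal, mul_apply]
    simpa [mulVec, dotProduct, mul_comm] using congrFun (h.mulVec_eq a) i
  rw [← hcol, Matrix.mul_assoc, h.transpose_mul_self, Matrix.mul_one]

theorem sum_sq_dotProduct (h : EigSystem M μ φ) (z : ι → ℝ) :
    ∑ a, (φ a ⬝ᵥ z) ^ 2 = z ⬝ᵥ z := by
  classical
  calc ∑ a, (φ a ⬝ᵥ z) ^ 2 = (of φ *ᵥ z) ⬝ᵥ (of φ *ᵥ z) := by simp [dotProduct, sq, mulVec]
    _ = z ⬝ᵥ z := by
      rw [dotProduct_mulVec, ← mulVec_transpose, mulVec_mulVec, h.transpose_mul_self,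
        one_mulVec, dotProduct_comm]

theorem dotProduct_mulVec_eq_sum (h : EigSystem M μ φ) (z : ι → ℝ) :
    z ⬝ᵥ M *ᵥ z = ∑ a, μ a * (φ a ⬝ᵥ z) ^ 2 := by
  classical
  calc z ⬝ᵥ M *ᵥ z = (of φ *ᵥ z) ⬝ᵥ diagonal μ *ᵥ (of φ *ᵥ z) := by
        conv_lhs => rw [h.eq_transpose_mul_diagonal_mul]
        rw [← mulVec_mulVec, ← mulVec_mulVec, dotProduct_mulVec, vecMul_transpose]
    _ = ∑ a, μ a * (φ a ⬝ᵥ z) ^ 2 := by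
        simp only [dotProduct, mulVec_diagonal]
        exact Finset.sum_congr rfl fun a _ => by simp [mulVec, dotProduct]; ring

theorem dotProduct_mulVec_le (h : EigSystem M μ φ) {z : ι → ℝ} {c : ℝ}
    (hc : ∀ a, φ a ⬝ᵥ z ≠ 0 → μ a ≤ c) : z ⬝ᵥ M *ᵥ z ≤ c * (z ⬝ᵥ z) := by
  rw [h.dotProduct_mulVec_eq_sum, ← h.sum_sq_dotProduct, Finset.mul_sum]
  refine Finset.sum_le_sum fun a _ => ?_
  by_cases ha : φ a ⬝ᵥ z = 0
  · simp [ha]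
  · exact mul_le_mul_of_nonneg_right (hc a ha) (sq_nonneg _)

theorem le_dotProduct_mulVec (h : EigSystem M μ φ) (z : ι → ℝ) {c : ℝ} (hc : ∀ a, c ≤ μ a) :
    c * (z ⬝ᵥ z) ≤ z ⬝ᵥ M *ᵥ z := by
  rw [h.dotProduct_mulVec_eq_sum, ← h.sum_sq_dotProduct, Finset.mul_sum]
  exact Finset.sum_le_sum fun a _ => mul_le_mul_of_nonneg_right (hc a) (sq_nonneg _)

theorem second_le_of_dotProduct_mulVec_le (h : EigSystem M μ φ) (hk : 1 < k) (u : ι → ℝ)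
    {c : ℝ} (hc : ∀ z, u ⬝ᵥ z = 0 → z ⬝ᵥ M *ᵥ z ≤ c * (z ⬝ᵥ z)) : μ ⟨1, hk⟩ ≤ c := by
  set i₀ : Fin k := ⟨0, by omega⟩
  set i₁ : Fin k := ⟨1, hk⟩
  have h01 : i₀ ≠ i₁ := by simp [i₀, i₁, Fin.ext_iff]
  have hμ : μ i₁ ≤ μ i₀ := h.antitone (Fin.mk_le_mk.mpr zero_le_one)
  set a := u ⬝ᵥ φ i₀
  set b := u ⬝ᵥ φ i₁
  by_cases ha : a = 0
  · have := hc (φ i₀) ha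
    rw [h.self_dotProduct_mulVec, h.dotProduct_eq, if_pos rfl, mul_one] at this
    exact hμ.trans this
  set x := b • φ i₀ - a • φ i₁
  have hux : u ⬝ᵥ x = 0 := by
    simp only [x, dotProduct_sub, dotProduct_smul, smul_eq_mul, a, b]; ring
  have hxx : x ⬝ᵥ x = b ^ 2 + a ^ 2 := by
    simp [x, sub_dotProduct, dotProduct_sub, h.dotProduct_eq, h01, h01.symm]; ring
  have hxMx : x ⬝ᵥ M *ᵥ x = b ^ 2 * μ i₀ + a ^ 2 * μ i₁ := by
    simp [x, mulVec_sub, mulVec_smul, h.mulVec_eq, sub_dotProduct, dotProduct_sub,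
      h.dotProduct_eq, h01, h01.symm]; ring
  have := hc x hux
  rw [hxMx, hxx] at this
  have ha2 : 0 < a ^ 2 := by positivity
  nlinarith [sq_nonneg b]

end EigSystem

theorem abs_le_of_mulVec_eq_smul {ι : Type} [Fintype ι] {A : Matrix ι ι ℝ} {x : ι → ℝ}
    {c b : ℝ} (hx : A *ᵥ x = c • x) (hx0 : x ≠ 0) (hA : ∀ i, ∑ j, |A i j| ≤ b) : |c| ≤ b := by
  classical
  have hc : Module.End.HasEigenvalue (toLin' A) c :=
    Module.End.hasEigenvalue_of_hasEigenvector
      ⟨Module.End.mem_eigenspace_iff.mpr (by rwa [toLin'_apply]), hx0⟩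
  obtain ⟨i, hi⟩ := eigenvalue_mem_ball hc
  rw [Metric.mem_closedBall, Real.dist_eq] at hi
  simp only [Real.norm_eq_abs] at hi
  calc |c| ≤ |c - A i i| + |A i i| := by simpa using abs_add_le (c - A i i) (A i i)
    _ ≤ ∑ j ∈ univ.erase i, |A i j| + |A i i| := by gcongr
    _ = ∑ j, |A i j| := Finset.sum_erase_add _ _ (mem_univ i)
    _ ≤ b := hA i

theorem sum_sq_sqrt_div_sum {ι : Type} [Fintype ι] {g : ι → ℝ} (hg : ∀ i, 0 ≤ g i)
    (hsum : ∑ i, g i ≠ 0) : ∑ i, √(g i / ∑ j, g j) ^ 2 = 1 := by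
  simp_rw [Real.sq_sqrt (div_nonneg (hg _) (sum_nonneg fun j _ => hg j))]
  rw [← sum_div, div_self hsum]

section DiagInvSqrtConj

variable {ι : Type} [Fintype ι] [DecidableEq ι] {r : ι → ℝ} {P : Matrix ι ι ℝ}

noncomputable def diagInvSqrtConj (r : ι → ℝ) (P : Matrix ι ι ℝ) : Matrix ι ι ℝ :=
  diagonal (fun w => (√(r w))⁻¹) * P * diagonal (fun w => (√(r w))⁻¹)

theorem diagInvSqrtConj_mulVec_sqrt_div (hr : ∀ w, 0 < r w) (hPr : P *ᵥ 1 = r) (s : ℝ) :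
    diagInvSqrtConj r P *ᵥ (fun w => √(r w / s)) = fun w => √(r w / s) := by
  have hv : (fun w => √(r w / s)) = (√s)⁻¹ • fun w => √(r w) := by
    ext w
    rw [Pi.smul_apply, smul_eq_mul, Real.sqrt_div (hr w).le, div_eq_inv_mul]
  have hone : diagonal (fun w => (√(r w))⁻¹) *ᵥ (fun w => √(r w)) = 1 := by
    ext w
    simp [mulVec_diagonal, (Real.sqrt_pos.mpr (hr w)).ne']
  rw [hv, mulVec_smul, diagInvSqrtConj, ← mulVec_mulVec, ← mulVec_mulVec, hone, hPr]
  congr 1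
  ext w
  simp [mulVec_diagonal, ← div_eq_inv_mul, Real.div_sqrt]

theorem abs_le_one_of_diagInvSqrtConj_mulVec_eq_smul (hP : ∀ i j, 0 ≤ P i j)
    (hr : ∀ w, 0 < r w) (hPr : P *ᵥ 1 = r) {x : ι → ℝ} {c : ℝ}
    (hx : diagInvSqrtConj r P *ᵥ x = c • x) (hx0 : x ≠ 0) : |c| ≤ 1 := by
  set D : Matrix ι ι ℝ := diagonal fun w => (√(r w))⁻¹
  -- `D² P` is similar to `D P D` and has nonnegative entries with row sums `1`
  refine abs_le_of_mulVec_eq_smul (A := D * D * P) (x := D *ᵥ x) ?_ ?_ fun i => ?_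
  · calc (D * D * P) *ᵥ (D *ᵥ x) = D *ᵥ (diagInvSqrtConj r P *ᵥ x) := by
          simp only [diagInvSqrtConj, mulVec_mulVec, Matrix.mul_assoc, D]
      _ = c • D *ᵥ x := by rw [hx, mulVec_smul]
  · contrapose! hx0
    ext w
    have := congrFun hx0 w
    simp only [D, mulVec_diagonal, Pi.zero_apply, mul_eq_zero, inv_eq_zero] at this
    exact this.resolve_left (Real.sqrt_pos.mpr (hr w)).ne'
  · have hrow : ∑ j, P i j = r i := by simpa [mulVec, dotProduct] using congrFun hPr i
    have hentry : ∀ j, (D * D * P) i j = (r i)⁻¹ * P i j := fun j => by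
      rw [diagonal_mul_diagonal, diagonal_mul, ← mul_inv, Real.mul_self_sqrt (hr i).le]
    simp only [hentry, abs_mul, abs_inv, abs_of_pos (hr i), abs_of_nonneg (hP i _),
      ← Finset.mul_sum, hrow, inv_mul_cancel₀ (hr i).ne', le_refl]

theorem EigSystem.top_eq_one_of_diagInvSqrtConj (hP : ∀ i j, 0 ≤ P i j) (hr : ∀ w, 0 < r w)
    (hPr : P *ᵥ 1 = r) {k : ℕ} {ν : Fin k → ℝ} {ψ : Fin k → ι → ℝ}
    (h : EigSystem (diagInvSqrtConj r P) ν ψ) (hk : 0 < k) : ν ⟨0, hk⟩ = 1 := by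
  refine le_antisymm ((le_abs_self _).trans ?_) ?_
  · refine abs_le_one_of_diagInvSqrtConj_mulVec_eq_smul hP hr hPr (h.mulVec_eq _) fun h0 => ?_
    simpa [h0] using h.dotProduct_eq ⟨0, hk⟩ ⟨0, hk⟩
  · have : Nonempty ι := Fintype.card_pos_iff.mp (h.1 ▸ hk)
    set v := fun w => √(r w / ∑ u, r u)
    have hv : v ⬝ᵥ v = 1 := by
      simpa [dotProduct, sq] using sum_sq_sqrt_div_sum (fun w => (hr w).le)
        (sum_pos (fun w _ => hr w) univ_nonempty).ne'
    have := h.dotProduct_mulVec_le (z := v) (c := ν ⟨0, hk⟩) fun a _ =>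
      h.antitone (Fin.le_def.mpr (Nat.zero_le _))
    rwa [diagInvSqrtConj_mulVec_sqrt_div hr hPr, hv, mul_one] at this

end DiagInvSqrtConj

section Compression

variable {m ι : Type} [Fintype m] [Fintype ι]

theorem dotProduct_transpose_mul_mul_mulVec (E : Matrix m ι ℝ) (A : Matrix m m ℝ) (t : ι → ℝ) :
    t ⬝ᵥ (Eᵀ * A * E) *ᵥ t = (E *ᵥ t) ⬝ᵥ A *ᵥ (E *ᵥ t) := by
  rw [← mulVec_mulVec, ← mulVec_mulVec, dotProduct_mulVec, vecMul_transpose]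

theorem transpose_mul_mul_eq_diagonal_mul_submatrix_mul_diagonal [DecidableEq m] [DecidableEq ι]
    (f : ι → m) (A : Matrix m m ℝ) (δ : ι → ℝ) :
    ((1 : Matrix m m ℝ).submatrix id f * diagonal δ)ᵀ * A *
        ((1 : Matrix m m ℝ).submatrix id f * diagonal δ) =
      diagonal δ * A.submatrix f f * diagonal δ := by
  have hright : A * (1 : Matrix m m ℝ).submatrix id f = A.submatrix id f := by
    simpa using mul_submatrix_one (Equiv.refl m) f A
  have hleft : (1 : Matrix m m ℝ).submatrix f id * A.submatrix id f = A.submatrix f f := by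
    simpa using one_submatrix_mul f (Equiv.refl m) (A.submatrix id f)
  simp only [transpose_mul, diagonal_transpose, transpose_submatrix, transpose_one,
    Matrix.mul_assoc]
  rw [← Matrix.mul_assoc A, hright, ← Matrix.mul_assoc _ (A.submatrix id f), hleft]

theorem mulVec_dotProduct_mulVec_le [DecidableEq m] [DecidableEq ι] {f : ι → m}
    (hf : Function.Injective f) {δ : ι → ℝ} {κ : ℝ} (hδ : ∀ w, δ w ^ 2 ≤ κ) (t : ι → ℝ) :
    ((1 : Matrix m m ℝ).submatrix id f * diagonal δ) *ᵥ t ⬝ᵥ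
      ((1 : Matrix m m ℝ).submatrix id f * diagonal δ) *ᵥ t ≤ κ * (t ⬝ᵥ t) := by
  set E := (1 : Matrix m m ℝ).submatrix id f * diagonal δ
  calc (E *ᵥ t) ⬝ᵥ (E *ᵥ t) = ∑ w, δ w ^ 2 * t w ^ 2 := by
        nth_rewrite 2 [← one_mulVec (E *ᵥ t)]
        rw [← dotProduct_transpose_mul_mul_mulVec,
          transpose_mul_mul_eq_diagonal_mul_submatrix_mul_diagonal, submatrix_one f hf,
          Matrix.mul_one, diagonal_mul_diagonal]
        simp only [dotProduct, mulVec_diagonal]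
        exact Finset.sum_congr rfl fun w _ => by ring
    _ ≤ ∑ w, κ * t w ^ 2 := by gcongr with w; exact hδ w
    _ = κ * (t ⬝ᵥ t) := by simp [dotProduct, Finset.mul_sum, sq]

variable {n k : ℕ} {A : Matrix m m ℝ} {μ : Fin n → ℝ} {φ : Fin n → m → ℝ}
  {ν : Fin k → ℝ} {ψ : Fin k → ι → ℝ} {E : Matrix m ι ℝ} {κ lam : ℝ}

namespace EigSystem

theorem neg_mul_le_of_transpose_mul_mul (hA : EigSystem A μ φ)
    (hB : EigSystem (Eᵀ * A * E) ν ψ) (hE : ∀ t, (E *ᵥ t) ⬝ᵥ (E *ᵥ t) ≤ κ * (t ⬝ᵥ t))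
    (hlam : 0 ≤ lam) (hμ : ∀ a, -lam ≤ μ a) (b : Fin k) : -(lam * κ) ≤ ν b := by
  have h1 := hA.le_dotProduct_mulVec (E *ᵥ ψ b) hμ
  have h2 := hE (ψ b)
  rw [hB.dotProduct_eq, if_pos rfl, mul_one] at h2
  rw [← hB.self_dotProduct_mulVec b, dotProduct_transpose_mul_mul_mulVec]
  nlinarith

theorem second_le_of_transpose_mul_mul (hA : EigSystem A μ φ)
    (hB : EigSystem (Eᵀ * A * E) ν ψ) (hE : ∀ t, (E *ᵥ t) ⬝ᵥ (E *ᵥ t) ≤ κ * (t ⬝ᵥ t))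
    (hlam : 0 ≤ lam) (hn : 0 < n) (hk : 1 < k) (hμ : ∀ a, a ≠ ⟨0, hn⟩ → μ a ≤ lam) :
    ν ⟨1, hk⟩ ≤ lam * κ := by
  refine hB.second_le_of_dotProduct_mulVec_le hk (Eᵀ *ᵥ φ ⟨0, hn⟩) fun t ht => ?_
  have horth : φ ⟨0, hn⟩ ⬝ᵥ E *ᵥ t = 0 := by rwa [dotProduct_mulVec, ← mulVec_transpose]
  rw [dotProduct_transpose_mul_mul_mulVec, mul_assoc]
  calc (E *ᵥ t) ⬝ᵥ A *ᵥ (E *ᵥ t) ≤ lam * ((E *ᵥ t) ⬝ᵥ (E *ᵥ t)) :=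
        hA.dotProduct_mulVec_le fun a ha => hμ a (by rintro rfl; exact ha horth)
    _ ≤ lam * (κ * (t ⬝ᵥ t)) := mul_le_mul_of_nonneg_left (hE t) hlam

theorem abs_le_of_diagonal_mul_submatrix_mul_diagonal [DecidableEq m] [DecidableEq ι]
    (hA : EigSystem A μ φ) {f : ι → m} (hf : Function.Injective f) {δ : ι → ℝ}
    (hB : EigSystem (diagonal δ * A.submatrix f f * diagonal δ) ν ψ) (hδ : ∀ w, δ w ^ 2 ≤ κ)
    (hn : 2 ≤ n) (hk : 2 ≤ k) (hlam : max |μ ⟨1, by omega⟩| |μ ⟨n - 1, by omega⟩| ≤ lam) :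
    max |ν ⟨1, by omega⟩| |ν ⟨k - 1, by omega⟩| ≤ lam * κ := by
  rw [← transpose_mul_mul_eq_diagonal_mul_submatrix_mul_diagonal] at hB
  have hE := mulVec_dotProduct_mulVec_le hf hδ
  have hlam0 : 0 ≤ lam := (abs_nonneg _).trans ((le_max_left _ _).trans hlam)
  have hlow := hA.neg_mul_le_of_transpose_mul_mul hB hE hlam0 fun a =>
    (neg_le_of_abs_le ((le_max_right _ _).trans hlam)).trans
      (hA.antitone (Fin.le_def.mpr (Nat.le_sub_one_of_lt a.isLt)))
  have hsecond := hA.second_le_of_transpose_mul_mul hB hE hlam0 (by omega) (by omega) fun a ha =>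
    (hA.antitone (Fin.le_def.mpr (Nat.one_le_iff_ne_zero.mpr (Fin.val_ne_of_ne ha)))).trans
      ((le_abs_self _).trans ((le_max_left _ _).trans hlam))
  have hord : ν ⟨k - 1, by omega⟩ ≤ ν ⟨1, by omega⟩ := hB.antitone (Fin.mk_le_mk.mpr (by omega))
  exact max_le (abs_le.mpr ⟨hlow _, hsecond⟩) (abs_le.mpr ⟨hlow _, hord.trans hsecond⟩)

end EigSystem

end Compression

section Graph

variable {V : Type} [Fintype V] [DecidableEq V] {G : SimpleGraph V} [DecidableRel G.Adj] {d : ℕ}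

theorem one_sub_card_filter_mem_div (hreg : G.IsRegularOfDegree d) (hd : 0 < d) (F : Finset V)
    (v : V) :
    1 - (#((G.neighborFinset v).filter (· ∈ F)) : ℝ) / d =
      (#((G.neighborFinset v).filter (· ∉ F)) : ℝ) / d := by
  have h := card_filter_add_card_filter_not (s := G.neighborFinset v) (· ∈ F)
  rw [G.card_neighborFinset_eq_degree, hreg v] at h
  have hd' : (d : ℝ) ≠ 0 := by positivity
  rw [eq_div_iff hd', sub_mul, div_mul_cancel₀ _ hd', ← h]
  push_cast
  ring

theorem adjMatrix_submatrix_mulVec_one (F : Finset V) :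
    ((d : ℝ)⁻¹ • G.adjMatrix ℝ).submatrix (fun w : {v // v ∉ F} => (w : V))
        (fun w : {v // v ∉ F} => (w : V)) *ᵥ 1 =
      fun w : {v // v ∉ F} => (#((G.neighborFinset (w : V)).filter (· ∉ F)) : ℝ) / d := by
  ext w
  simp only [mulVec, dotProduct, submatrix_apply, Matrix.smul_apply, Pi.one_apply, mul_one,
    smul_eq_mul, ← Finset.mul_sum]
  rw [div_eq_inv_mul]
  congr 1
  rw [← Finset.sum_subtype Fᶜ (fun _ => mem_compl) (fun u => G.adjMatrix ℝ w u)]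
  simp [SimpleGraph.adjMatrix_apply, Finset.sum_boole]
  congr 1
  ext x
  simp [and_comm]

end Graph

/-- Let `G` be a `(d,λ)`-expander on `n` vertices, `F` a set of
`f` curious nodes with adversarial density `α_F < 1 − λ`, `Q = Â[V∖F]` the
principal submatrix of the normalized adjacency matrix indexed by `V∖F`, `R` the
diagonal matrix with `R_ww = deg_F(w)/d`, and
`Q̄ = (I − R)^{-1/2} Q (I − R)^{-1/2}`.  Then `λ₁(Q̄) = 1`, with ℓ₂-normalized
first eigenvector `φ̄₁` given by `φ̄₁(w)² = deg_{V∖F}(w)/Σ_{u∈V∖F} deg_{V∖F}(u)`,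
and `max (|λ₂(Q̄)|, |λ_{n−f}(Q̄)|) ≤ λ/(1 − α_F)`. -/
theorem stmt_19 (n d f : ℕ) (hd : 0 < d) (hfn : f + 2 ≤ n)
    (G : SimpleGraph (Fin n)) [DecidableRel G.Adj] (hreg : G.IsRegularOfDegree d)
    (μ : Fin n → ℝ) (φ : Fin n → Fin n → ℝ)
    (hA : EigSystem ((d : ℝ)⁻¹ • G.adjMatrix ℝ) μ φ)
    (lam : ℝ) (hlam : max |μ ⟨1, by omega⟩| |μ ⟨n - 1, by omega⟩| ≤ lam)
    (F : Finset (Fin n)) (hne : Fᶜ.Nonempty)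
    (α : ℝ)
    (hα : α = Fᶜ.sup' hne fun v =>
        (((G.neighborFinset v).filter (· ∈ F)).card : ℝ) / d)
    (hsmall : α < 1 - lam)
    (Qbar : Matrix {v : Fin n // v ∉ F} {v : Fin n // v ∉ F} ℝ)
    (hQbar : Qbar =
        (Matrix.diagonal fun w : {v : Fin n // v ∉ F} =>
          (Real.sqrt (1 - (((G.neighborFinset (w : Fin n)).filter (· ∈ F)).card : ℝ) / d))⁻¹)
        * ((d : ℝ)⁻¹ • G.adjMatrix ℝ).submatrix
            (fun w : {v : Fin n // v ∉ F} => (w : Fin n))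
            (fun w : {v : Fin n // v ∉ F} => (w : Fin n))
        * (Matrix.diagonal fun w : {v : Fin n // v ∉ F} =>
          (Real.sqrt (1 - (((G.neighborFinset (w : Fin n)).filter (· ∈ F)).card : ℝ) / d))⁻¹))
    (φbar : {v : Fin n // v ∉ F} → ℝ)
    (hφbar : ∀ w : {v : Fin n // v ∉ F}, φbar w =
        Real.sqrt ((((G.neighborFinset (w : Fin n)).filter (· ∉ F)).card : ℝ)
          / ∑ u : {v : Fin n // v ∉ F},
              (((G.neighborFinset (u : Fin n)).filter (· ∉ F)).card : ℝ)))
    (ν : Fin (n - f) → ℝ) (ψ : Fin (n - f) → {v : Fin n // v ∉ F} → ℝ)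
    (hνψ : EigSystem Qbar ν ψ) :
    ν ⟨0, by omega⟩ = 1 ∧ Qbar.mulVec φbar = φbar ∧ (∑ w, φbar w ^ 2 = 1) ∧
      max |ν ⟨1, by omega⟩| |ν ⟨n - f - 1, by omega⟩| ≤ lam / (1 - α) := by
  set r : {v : Fin n // v ∉ F} → ℝ := fun w =>
    (((G.neighborFinset (w : Fin n)).filter (· ∉ F)).card : ℝ) / d
  set P := ((d : ℝ)⁻¹ • G.adjMatrix ℝ).submatrix (fun w : {v : Fin n // v ∉ F} => (w : Fin n))
    (fun w : {v : Fin n // v ∉ F} => (w : Fin n))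
  have hP : ∀ i j, 0 ≤ P i j := fun i j => by
    simp only [P, submatrix_apply, Matrix.smul_apply, smul_eq_mul, SimpleGraph.adjMatrix_apply]
    split_ifs <;> positivity
  have hr : ∀ w, 1 - α ≤ r w := fun w => by
    dsimp only [r]
    rw [← one_sub_card_filter_mem_div hreg hd, hα]
    exact sub_le_sub_left (le_sup' _ (mem_compl.mpr w.2)) 1
  have hα1 : 0 < 1 - α := by linarith [(abs_nonneg _).trans ((le_max_left _ _).trans hlam)]
  have hr0 : ∀ w, 0 < r w := fun w => hα1.trans_le (hr w)
  have hPr : P *ᵥ 1 = r := adjMatrix_submatrix_mulVec_one F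
  have hQ : Qbar = diagInvSqrtConj r P := by
    simp only [hQbar, diagInvSqrtConj, r, one_sub_card_filter_mem_div hreg hd, P]
  have hφ : φbar = fun w => √(r w / ∑ u, r u) := by
    funext w
    rw [hφbar, ← Finset.sum_div, div_div_div_cancel_right₀ (by positivity)]
  subst hQ hφ
  refine ⟨hνψ.top_eq_one_of_diagInvSqrtConj hP hr0 hPr _,
    diagInvSqrtConj_mulVec_sqrt_div hr0 hPr _,
    sum_sq_sqrt_div_sum (fun w => (hr0 w).le)
      (sum_pos (fun w _ => hr0 w) (univ_nonempty_iff.mpr ⟨⟨_, mem_compl.mp hne.choose_spec⟩⟩)).ne',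
    ?_⟩
  rw [div_eq_mul_inv]
  refine hA.abs_le_of_diagonal_mul_submatrix_mul_diagonal Subtype.val_injective hνψ (fun w => ?_)
    (by omega) (by omega) hlam
  rw [inv_pow, Real.sq_sqrt (hr0 w).le]
  exact inv_anti₀ hα1 (hr w)
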